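/- arXiv:1404.4731 — 5 statements merged into one kernel-verified Lean document; each statement's English description precedes it below -/
import Mathlib

section
/- Let n ≥ 2 and suppose real numbers a₁,…,a_n satisfy a₁ = 1, a₂ ≥ 2, and a_i² ≤ a_{i+1}·a₁ for all i = 2,…,n−1. Then a_i ≥ 2^{2^{i−2}} for every i with 2 ≤ i ≤ n. -/
/-- If `a₁ = 1`, `a₂ ≥ 2` and `a_i² ≤ a_{i+1}·a₁` for `2 ≤ i ≤ n−1`, then
`a_i ≥ 2^{2^{i−2}}` for `2 ≤ i ≤ n`. -/
theorem doubly_exponential_growth (n : ℕ) (hn : 2 ≤ n) (a : ℕ → ℝ)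
    (h1 : a 1 = 1) (h2 : 2 ≤ a 2)
    (hrec : ∀ i, 2 ≤ i → i ≤ n - 1 → (a i) ^ 2 ≤ a (i + 1) * a 1) :
    ∀ i, 2 ≤ i → i ≤ n → (2:ℝ) ^ (2 ^ (i - 2)) ≤ a i := by
  intro i
  induction i with
  | zero => omega
  | succ j ih =>
    intro h2j hjn
    rcases Nat.lt_or_ge j 2 with hj | hj
    · interval_cases j
      · omega
      · simpa using h2
    · have hjn' : j ≤ n - 1 := by omega
      have hrecj := hrec j hj hjn'
      rw [h1, mul_one] at hrecj
      have hih := ih hj (by omega)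
      have hpos : (0:ℝ) ≤ (2:ℝ) ^ (2 ^ (j - 2)) := by positivity
      calc (2:ℝ) ^ (2 ^ (j + 1 - 2)) = ((2:ℝ) ^ (2 ^ (j - 2))) ^ 2 := by
            rw [← pow_mul]
            congr 1
            have : j + 1 - 2 = (j - 2) + 1 := by omega
            rw [this, pow_succ]
        _ ≤ (a j) ^ 2 := by gcongr
        _ ≤ a (j + 1) := hrecj
end

section
/- Let π and ρ be quadratic functions with ρ(x) − π(x) = c(x−t₀)² for some c > 0 and t₀ ∈ ℝ (so ρ is tangent to π at x = t₀ from above). Let f : ℝ → ℝ be a 3-monotone function equal to π on [t₀, ∞). Then the function g equal to f on (−∞, t₀] and equal to ρ on [t₀, ∞) is 3-monotone. -/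
/-!
Write `g = f + c · ((x - t₀)⁺)²`: for `x ≤ t₀` the bump vanishes, and for `x ≥ t₀` we have
`f = π`, so `f + c (x - t₀)² = ρ`. The bump `(x⁺)²` is differentiable with derivative `2 x⁺`
(at `0` it is `O(x²)`), hence `g' = f' + 2c (x - t₀)⁺`, a sum of two convex functions.
-/

open Asymptotics Filter Set Topology

theorem hasDerivAt_max_zero_sq (x : ℝ) :
    HasDerivAt (fun y : ℝ => max y 0 ^ 2) (2 * max x 0) x := by
  rcases lt_trichotomy x 0 with hx | rfl | hx
  · rw [max_eq_right hx.le, mul_zero]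
    refine (hasDerivAt_const x (0 : ℝ)).congr_of_eventuallyEq ?_
    filter_upwards [Iio_mem_nhds hx] with y hy
    simp [max_eq_right (mem_Iio.mp hy).le]
  · rw [hasDerivAt_iff_isLittleO_nhds_zero]
    have hbound : (fun y : ℝ => max y 0 ^ 2) =O[𝓝 0] fun y => y ^ 2 :=
      IsBigO.of_bound 1 <| Eventually.of_forall fun y => by
        rw [one_mul, norm_pow, norm_pow]
        gcongr
        exact abs_max_le_max_abs_abs.trans (by simp)
    simpa using hbound.trans_isLittleO (isLittleO_pow_id one_lt_two)
  · rw [max_eq_left hx.le]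
    have hsq : HasDerivAt (fun y : ℝ => y ^ 2) (2 * x) x := by simpa using hasDerivAt_pow 2 x
    refine hsq.congr_of_eventuallyEq ?_
    filter_upwards [Ioi_mem_nhds hx] with y hy
    simp [max_eq_left (mem_Ioi.mp hy).le]

theorem convexOn_max_sub_zero (a : ℝ) : ConvexOn ℝ univ fun x : ℝ => max (x - a) 0 :=
  ((convexOn_id convex_univ).sub (concaveOn_const a convex_univ)).sup
    (convexOn_const 0 convex_univ)

theorem glue_tangent_parabola_threeMonotone_general
    (π ρ : ℝ → ℝ) (c t₀ : ℝ) (hc : 0 < c)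
    (hρ : ∀ x, ρ x = π x + c * (x - t₀) ^ 2)
    (f : ℝ → ℝ) (hfdiff : Differentiable ℝ f)
    (hfconv : ConvexOn ℝ Set.univ (deriv f))
    (hfπ : ∀ x ∈ Set.Ici t₀, f x = π x) :
    Differentiable ℝ (fun x => if x ≤ t₀ then f x else ρ x) ∧
    ConvexOn ℝ Set.univ (deriv (fun x => if x ≤ t₀ then f x else ρ x)) := by
  have hglue : (fun x => if x ≤ t₀ then f x else ρ x) =
      fun x => f x + c * max (x - t₀) 0 ^ 2 := by
    funext x
    by_cases hx : x ≤ t₀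
    · simp [hx]
    · rw [if_neg hx, hρ, hfπ x (le_of_not_ge hx), max_eq_left (by linarith)]
  have hderiv (x : ℝ) : HasDerivAt (fun x => f x + c * max (x - t₀) 0 ^ 2)
      (deriv f x + c * (2 * max (x - t₀) 0)) x :=
    (hfdiff x).hasDerivAt.add
      (((hasDerivAt_max_zero_sq (x - t₀)).comp_sub_const x t₀).const_mul c)
  rw [hglue, funext fun x => (hderiv x).deriv]
  refine ⟨fun x => (hderiv x).differentiableAt, hfconv.add ?_⟩
  simpa only [smul_eq_mul, mul_assoc] using
    (convexOn_max_sub_zero t₀).smul (by positivity : (0 : ℝ) ≤ c * 2)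

/-- Gluing a 3-monotone function to a tangent parabola from above preserves
3-monotonicity. -/
theorem glue_tangent_parabola_threeMonotone
    (π ρ : ℝ → ℝ) (c t₀ : ℝ) (hc : 0 < c)
    (hπ : ∃ a b d : ℝ, ∀ x, π x = a * x ^ 2 + b * x + d)
    (hρ : ∀ x, ρ x = π x + c * (x - t₀) ^ 2)
    (f : ℝ → ℝ) (hfdiff : Differentiable ℝ f)
    (hfconv : ConvexOn ℝ Set.univ (deriv f))
    (hfπ : ∀ x ∈ Set.Ici t₀, f x = π x) :
    Differentiable ℝ (fun x => if x ≤ t₀ then f x else ρ x) ∧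
    ConvexOn ℝ Set.univ (deriv (fun x => if x ≤ t₀ then f x else ρ x)) :=
  glue_tangent_parabola_threeMonotone_general π ρ c t₀ hc hρ f hfdiff hfconv hfπ
end

section
/- Let f : ℝ → ℝ be 3-monotone (f' exists and is convex), and let x₀ < x₁ < x₂ < x₃ be arbitrary. Then [x₀,x₁,x₂,x₃]f ≥ 0. -/
/-!
Rolle's theorem applied to `f` minus its quadratic Newton interpolant at `a < b < c` produces
`z₁ ∈ (a, b)` and `z₂ ∈ (b, c)` at which `f'` agrees with the (affine) derivative of the interpolant,
so `[a, b, c]f` is half the slope of `f'` between `z₁` and `z₂`. The two second divided differences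
making up `[x₀, x₁, x₂, x₃]f` are therefore half-slopes of `f'` over intervals `[z₁, z₂]` and
`[w₁, w₂]` with `z₁ < w₁` and `z₂ < w₂`, and slopes of the convex function `f'` increase with both
endpoints.
-/

/-- Third divided difference `[x₀,x₁,x₂,x₃]f`. -/
noncomputable def dd3 (f : ℝ → ℝ) (x0 x1 x2 x3 : ℝ) : ℝ :=
  (((f x3 - f x2) / (x3 - x2) - (f x2 - f x1) / (x2 - x1)) / (x3 - x1)
    - ((f x2 - f x1) / (x2 - x1) - (f x1 - f x0) / (x1 - x0)) / (x2 - x0))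
    / (x3 - x0)

open Set

theorem ConvexOn.slope_le_slope {𝕜 : Type*} [Field 𝕜] [LinearOrder 𝕜] [IsStrictOrderedRing 𝕜]
    {s : Set 𝕜} {φ : 𝕜 → 𝕜} (hφ : ConvexOn 𝕜 s φ) {a b c d : 𝕜} (ha : a ∈ s) (hb : b ∈ s)
    (hc : c ∈ s) (hd : d ∈ s) (hab : a < b) (hcd : c < d) (hac : a ≤ c) (hbd : b ≤ d) :
    slope φ a b ≤ slope φ c d :=
  have had : a < d := hab.trans_le hbd
  calc slope φ a b ≤ slope φ a d := hφ.slope_mono ha ⟨hb, hab.ne'⟩ ⟨hd, had.ne'⟩ hbd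
    _ = slope φ d a := slope_comm φ a d
    _ ≤ slope φ d c := hφ.slope_mono hd ⟨ha, had.ne⟩ ⟨hc, hcd.ne⟩ hac
    _ = slope φ c d := slope_comm φ d c

theorem exists_deriv_eq_deriv_of_eq_of_eq {f g : ℝ → ℝ} {a b : ℝ} (hab : a < b)
    (hf : DifferentiableOn ℝ f (Icc a b)) (hg : DifferentiableOn ℝ g (Icc a b))
    (ha : f a = g a) (hb : f b = g b) : ∃ z ∈ Ioo a b, deriv f z = deriv g z := by
  obtain ⟨z, hz, hderiv⟩ := exists_deriv_eq_zero hab (hf.sub hg).continuousOn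
    (by rw [Pi.sub_apply, Pi.sub_apply, ha, hb, sub_self, sub_self])
  refine ⟨z, hz, sub_eq_zero.1 ?_⟩
  have hIcc : Icc a b ∈ nhds z := Icc_mem_nhds hz.1 hz.2
  rwa [deriv_sub ((hf z (Ioo_subset_Icc_self hz)).differentiableAt hIcc)
    ((hg z (Ioo_subset_Icc_self hz)).differentiableAt hIcc)] at hderiv

/-- `[a, b, c]f`. -/
noncomputable def dd2 (f : ℝ → ℝ) (a b c : ℝ) : ℝ :=
  (slope f b c - slope f a b) / (c - a)

theorem dd3_eq_dd2_sub_dd2 (f : ℝ → ℝ) (x0 x1 x2 x3 : ℝ) :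
    dd3 f x0 x1 x2 x3 = (dd2 f x1 x2 x3 - dd2 f x0 x1 x2) / (x3 - x0) := by
  simp only [dd3, dd2, slope_def_field]

noncomputable def newtonQuadratic (f : ℝ → ℝ) (a b c t : ℝ) : ℝ :=
  f a + slope f a b * (t - a) + dd2 f a b c * ((t - a) * (t - b))

theorem newtonQuadratic_apply_left (f : ℝ → ℝ) (a b c : ℝ) : newtonQuadratic f a b c a = f a := by
  simp [newtonQuadratic]

theorem newtonQuadratic_apply_middle (f : ℝ → ℝ) {a b : ℝ} (c : ℝ) (hab : a ≠ b) :
    newtonQuadratic f a b c b = f b := by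
  have : b - a ≠ 0 := sub_ne_zero.2 hab.symm
  simp only [newtonQuadratic, slope_def_field, sub_self, mul_zero, add_zero]
  field_simp
  ring

theorem newtonQuadratic_apply_right (f : ℝ → ℝ) {a b c : ℝ} (hab : a ≠ b) (hbc : b ≠ c)
    (hac : a ≠ c) : newtonQuadratic f a b c c = f c := by
  have : b - a ≠ 0 := sub_ne_zero.2 hab.symm
  have : c - b ≠ 0 := sub_ne_zero.2 hbc.symm
  have : c - a ≠ 0 := sub_ne_zero.2 hac.symm
  simp only [newtonQuadratic, dd2, slope_def_field]
  field_simp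
  ring

theorem hasDerivAt_newtonQuadratic (f : ℝ → ℝ) (a b c t : ℝ) :
    HasDerivAt (newtonQuadratic f a b c) (slope f a b + dd2 f a b c * (2 * t - a - b)) t := by
  have hlin := (hasDerivAt_id' t).sub_const a
  have hquad := (hlin.mul ((hasDerivAt_id' t).sub_const b)).const_mul (dd2 f a b c)
  exact (((hlin.const_mul (slope f a b)).const_add (f a)).add hquad).congr_deriv (by ring)

theorem exists_slope_deriv_eq_two_mul_dd2 {f : ℝ → ℝ} (hf : Differentiable ℝ f) {a b c : ℝ}
    (hab : a < b) (hbc : b < c) :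
    ∃ z₁ ∈ Ioo a b, ∃ z₂ ∈ Ioo b c, slope (deriv f) z₁ z₂ = 2 * dd2 f a b c := by
  have hp : Differentiable ℝ (newtonQuadratic f a b c) := fun t =>
    (hasDerivAt_newtonQuadratic f a b c t).differentiableAt
  have hpa := newtonQuadratic_apply_left f a b c
  have hpb := newtonQuadratic_apply_middle f c hab.ne
  have hpc := newtonQuadratic_apply_right f hab.ne hbc.ne (hab.trans hbc).ne
  obtain ⟨z₁, hz₁, hfz₁⟩ := exists_deriv_eq_deriv_of_eq_of_eq hab hf.differentiableOn
    hp.differentiableOn hpa.symm hpb.symm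
  obtain ⟨z₂, hz₂, hfz₂⟩ := exists_deriv_eq_deriv_of_eq_of_eq hbc hf.differentiableOn
    hp.differentiableOn hpb.symm hpc.symm
  refine ⟨z₁, hz₁, z₂, hz₂, ?_⟩
  have : z₂ - z₁ ≠ 0 := sub_ne_zero.2 (hz₁.2.trans hz₂.1).ne'
  rw [slope_def_field, hfz₁, hfz₂, (hasDerivAt_newtonQuadratic f a b c z₁).deriv,
    (hasDerivAt_newtonQuadratic f a b c z₂).deriv]
  field_simp
  ring

/-- A 3-monotone function (differentiable with convex derivative) has
nonnegative third divided differences. -/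
theorem threeMonotone_dd3_nonneg (f : ℝ → ℝ)
    (hdiff : Differentiable ℝ f) (hconv : ConvexOn ℝ Set.univ (deriv f))
    (x0 x1 x2 x3 : ℝ) (h01 : x0 < x1) (h12 : x1 < x2) (h23 : x2 < x3) :
    0 ≤ dd3 f x0 x1 x2 x3 := by
  obtain ⟨z₁, hz₁, z₂, hz₂, hz⟩ := exists_slope_deriv_eq_two_mul_dd2 hdiff h01 h12
  obtain ⟨w₁, hw₁, w₂, hw₂, hw⟩ := exists_slope_deriv_eq_two_mul_dd2 hdiff h12 h23
  have hslope : slope (deriv f) z₁ z₂ ≤ slope (deriv f) w₁ w₂ :=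
    hconv.slope_le_slope trivial trivial trivial trivial (hz₁.2.trans hz₂.1)
      (hw₁.2.trans hw₂.1) (hz₁.2.trans hw₁.1).le (hz₂.2.trans hw₂.1).le
  rw [dd3_eq_dd2_sub_dd2]
  exact div_nonneg (by linarith) (by linarith)
end

section
/- Let p(t) be a univariate real polynomial of degree at most d. Then p(t) ≥ 0 for all t ∈ [−1,1] if and only if there exist polynomials f and h, each a sum of squares of polynomials, with deg f ≤ 2d and deg h ≤ 2d − 2, such that p(t) = f(t) + (1 − t)(1 + t)h(t) for all t. -/
/-!
Certificates `f + (1 - X²) h`, with `f` and `h` sums of squares, are closed under sums and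
products, and `1 ∓ X = ((1 ∓ X)² + (1 - X²)) / 2` has one. Subtracting from `p` its minimum on
`[-1, 1]` leaves a polynomial with a root at the minimiser `t₀`; it is divisible by `1 - X` if
`t₀ = 1`, by `1 + X` if `t₀ = -1`, and by `(X - t₀)²` otherwise, since an interior local minimum is
a double root. The quotient is again nonnegative on `[-1, 1]`, so induction on the degree applies.
-/

open Polynomial Set

theorem IsSumSq.map {R S F : Type*} [Semiring R] [Semiring S] [FunLike F R S]
    [RingHomClass F R S] (φ : F) {a : R} (ha : IsSumSq a) : IsSumSq (φ a) := by
  induction ha with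
  | zero => simp
  | sq_add b _ ih => simpa using ih.sq_add (φ b)

theorem IsSumSq.eval_nonneg {R : Type*} [CommSemiring R] [LinearOrder R] [IsStrictOrderedRing R]
    [ExistsAddOfLE R] {f : R[X]} (hf : IsSumSq f) (t : R) : 0 ≤ f.eval t :=
  (hf.map (evalRingHom t)).nonneg

theorem nonneg_on_Icc_of_mul_nonneg {a b t₀ : ℝ} (hab : a < b) {g r : ℝ → ℝ}
    (hr : Continuous r) (hg : ∀ t ∈ Ioo a b, t ≠ t₀ → 0 < g t)
    (hgr : ∀ t ∈ Ioo a b, 0 ≤ g t * r t) : ∀ t ∈ Icc a b, 0 ≤ r t := by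
  have hoff : Ioo a b ∩ {t₀}ᶜ ⊆ {t | 0 ≤ r t} := fun t ⟨ht, hne⟩ ↦
    (mul_nonneg_iff_of_pos_left (hg t ht hne)).1 (hgr t ht)
  have hclosed : IsClosed {t | 0 ≤ r t} := isClosed_le continuous_const hr
  have hIoo : Ioo a b ⊆ {t | 0 ≤ r t} :=
    ((dense_compl_singleton t₀).open_subset_closure_inter isOpen_Ioo).trans
      (closure_minimal hoff hclosed)
  rw [← closure_Ioo hab.ne]
  exact closure_minimal hIoo hclosed

namespace Polynomial

theorem isSumSq_C_of_nonneg {c : ℝ} (hc : 0 ≤ c) : IsSumSq (C c) :=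
  ((Real.isSquare_iff.2 hc).map C).isSumSq

theorem natDegree_le_natDegree_mul_sub_natDegree {R : Type*} [Semiring R] [NoZeroDivisors R]
    {w h : R[X]} (hw : w ≠ 0) : h.natDegree ≤ (w * h).natDegree - w.natDegree := by
  rcases eq_or_ne h 0 with rfl | hh
  · simp
  · rw [natDegree_mul hw hh]
    omega

section WeightedSOS

variable {R : Type*} [CommSemiring R] {w p q : R[X]} {m n : ℕ}

-- A degree-`n` element of the quadratic module generated by `w`. Bounding the degree of `w * h`
-- rather than that of `h` avoids a truncated subtraction.
def HasWeightedSOSRep (w : R[X]) (n : ℕ) (p : R[X]) : Prop :=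
  ∃ f h : R[X], IsSumSq f ∧ IsSumSq h ∧ f.natDegree ≤ n ∧ (w * h).natDegree ≤ n ∧
    p = f + w * h

theorem hasWeightedSOSRep_of_isSumSq (hp : IsSumSq p) (hn : p.natDegree ≤ n) :
    HasWeightedSOSRep w n p :=
  ⟨p, 0, hp, .zero, hn, by simp, by simp⟩

theorem HasWeightedSOSRep.mono (hp : HasWeightedSOSRep w m p) (hmn : m ≤ n) :
    HasWeightedSOSRep w n p := by
  obtain ⟨f, h, hf, hh, hfd, hhd, rfl⟩ := hp
  exact ⟨f, h, hf, hh, hfd.trans hmn, hhd.trans hmn, rfl⟩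

theorem HasWeightedSOSRep.add (hp : HasWeightedSOSRep w n p) (hq : HasWeightedSOSRep w n q) :
    HasWeightedSOSRep w n (p + q) := by
  obtain ⟨f, h, hf, hh, hfd, hhd, rfl⟩ := hp
  obtain ⟨f', h', hf', hh', hfd', hhd', rfl⟩ := hq
  refine ⟨f + f', h + h', hf.add hf', hh.add hh', natDegree_add_le_of_degree_le hfd hfd', ?_,
    by ring⟩
  rw [mul_add]
  exact natDegree_add_le_of_degree_le hhd hhd'

-- `(f + w h) (f' + w h') = (f f' + (w h) (w h')) + w (f h' + h f')`.
theorem HasWeightedSOSRep.mul (hp : HasWeightedSOSRep w m p) (hq : HasWeightedSOSRep w n q) :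
    HasWeightedSOSRep w (m + n) (p * q) := by
  obtain ⟨f, h, hf, hh, hfd, hhd, rfl⟩ := hp
  obtain ⟨f', h', hf', hh', hfd', hhd', rfl⟩ := hq
  have hprod {a b : R[X]} (ha : a.natDegree ≤ m) (hb : b.natDegree ≤ n) :
      (a * b).natDegree ≤ m + n :=
    natDegree_mul_le.trans (add_le_add ha hb)
  refine ⟨f * f' + (w * h) * (w * h'), f * h' + h * f', ?_, (hf.mul hh').add (hh.mul hf'),
    natDegree_add_le_of_degree_le (hprod hfd hfd') (hprod hhd hhd'), ?_, by ring⟩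
  · rw [mul_mul_mul_comm]
    exact (hf.mul hf').add ((IsSumSq.mul_self w).mul (hh.mul hh'))
  · rw [show w * (f * h' + h * f') = f * (w * h') + (w * h) * f' by ring]
    exact natDegree_add_le_of_degree_le (hprod hfd hhd') (hprod hhd hfd')

end WeightedSOS

-- `l = (l² + w) / 2`.
theorem hasWeightedSOSRep_of_two_mul_eq {l w : ℝ[X]} (hl : l.natDegree ≤ 1) (hw : w.natDegree ≤ 2)
    (hlw : 2 * l = l * l + w) : HasWeightedSOSRep w 2 l := by
  have hhalf : IsSumSq (C (1 / 2 : ℝ)) := isSumSq_C_of_nonneg (by norm_num)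
  refine ⟨C (1 / 2) * (l * l), C (1 / 2), hhalf.mul (.mul_self l), hhalf, ?_, ?_, ?_⟩
  · exact (natDegree_C_mul_le _ _).trans (natDegree_mul_le.trans (by omega))
  · exact (natDegree_mul_C_le _ _).trans hw
  · have htwo : C (1 / 2 : ℝ) * 2 = 1 := by
      rw [← C_ofNat, ← C_mul]
      norm_num
    linear_combination C (1 / 2 : ℝ) * hlw - l * htwo

theorem X_sub_C_sq_dvd_of_isLocalMin {p : ℝ[X]} {a : ℝ} (hroot : p.IsRoot a)
    (hmin : IsLocalMin (fun t ↦ p.eval t) a) : (X - C a) ^ 2 ∣ p := by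
  rcases eq_or_ne p 0 with rfl | hp
  · exact dvd_zero _
  rw [← le_rootMultiplicity_iff hp]
  exact (one_lt_rootMultiplicity_iff_isRoot hp).2
    ⟨hroot, by simpa only [Polynomial.deriv, IsRoot.def] using hmin.deriv_eq_zero⟩

theorem exists_eq_mul_of_isRoot_of_nonneg_on_Icc {q : ℝ[X]} {t₀ : ℝ}
    (hq : ∀ t ∈ Icc (-1 : ℝ) 1, 0 ≤ q.eval t) (ht₀ : t₀ ∈ Icc (-1 : ℝ) 1) (hroot : q.IsRoot t₀) :
    ∃ g r : ℝ[X], q = g * r ∧ HasWeightedSOSRep ((1 - X) * (1 + X)) 2 g ∧ 0 < g.natDegree ∧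
      ∀ t ∈ Ioo (-1 : ℝ) 1, t ≠ t₀ → 0 < g.eval t := by
  have hw : ((1 - X) * (1 + X) : ℝ[X]).natDegree ≤ 2 := by compute_degree
  obtain ⟨r, hr⟩ := dvd_iff_isRoot.2 hroot
  obtain ⟨hlo, hhi⟩ := ht₀
  rcases hhi.eq_or_lt with rfl | hhi
  · refine ⟨1 - X, -r, by rw [hr, C_1]; ring,
      hasWeightedSOSRep_of_two_mul_eq (by compute_degree) hw (by ring),
      (show (1 - X : ℝ[X]).natDegree = 1 by compute_degree!) ▸ one_pos, fun t ht _ ↦ ?_⟩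
    simpa using ht.2
  rcases hlo.eq_or_lt with rfl | hlo
  · refine ⟨1 + X, r, by rw [hr, map_neg, C_1]; ring,
      hasWeightedSOSRep_of_two_mul_eq (by compute_degree) hw (by ring),
      (show (1 + X : ℝ[X]).natDegree = 1 by compute_degree!) ▸ one_pos, fun t ht _ ↦ ?_⟩
    simp only [eval_add, eval_one, eval_X]
    linarith [ht.1]
  have hmin : IsMinOn (fun t ↦ q.eval t) (Icc (-1) 1) t₀ :=
    isMinOn_iff.2 fun t ht ↦ hroot.eq_zero ▸ hq t ht
  obtain ⟨r, rfl⟩ := X_sub_C_sq_dvd_of_isLocalMin hroot (hmin.isLocalMin (Icc_mem_nhds hlo hhi))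
  refine ⟨(X - C t₀) ^ 2, r, rfl, hasWeightedSOSRep_of_isSumSq (IsSquare.sq _).isSumSq
    (by compute_degree), by simp, fun t _ hne ↦ ?_⟩
  simpa using sq_pos_of_ne_zero (sub_ne_zero.2 hne)

theorem hasWeightedSOSRep_of_nonneg_on_Icc {p : ℝ[X]}
    (hp : ∀ t ∈ Icc (-1 : ℝ) 1, 0 ≤ p.eval t) :
    HasWeightedSOSRep ((1 - X) * (1 + X)) (2 * p.natDegree) p := by
  induction hn : p.natDegree using Nat.strong_induction_on generalizing p with
  | _ n ih =>
  obtain ⟨t₀, ht₀, hmin⟩ := isCompact_Icc.exists_isMinOn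
    (nonempty_Icc.2 (by norm_num : (-1 : ℝ) ≤ 1)) p.continuous.continuousOn
  set q := p - C (p.eval t₀) with hq_def
  have hq : ∀ t ∈ Icc (-1 : ℝ) 1, 0 ≤ q.eval t := fun t ht ↦ by
    simpa [q] using isMinOn_iff.1 hmin t ht
  have hpq : p = q + C (p.eval t₀) := by ring
  rw [hpq]
  refine HasWeightedSOSRep.add ?_
    (hasWeightedSOSRep_of_isSumSq (isSumSq_C_of_nonneg (hp t₀ ht₀)) (by simp))
  rcases eq_or_ne q 0 with hq0 | hq0
  · rw [hq0]
    exact hasWeightedSOSRep_of_isSumSq .zero (by simp)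
  obtain ⟨g, r, hgr, hg, hg_deg, hg_pos⟩ :=
    exists_eq_mul_of_isRoot_of_nonneg_on_Icc hq ht₀ (by simp [q])
  have hdeg : n = g.natDegree + r.natDegree := by
    rw [← hn, ← natDegree_sub_C (a := p.eval t₀), ← hq_def, hgr,
      natDegree_mul (left_ne_zero_of_mul (hgr ▸ hq0)) (right_ne_zero_of_mul (hgr ▸ hq0))]
  have hr : ∀ t ∈ Icc (-1 : ℝ) 1, 0 ≤ r.eval t :=
    nonneg_on_Icc_of_mul_nonneg (by norm_num) r.continuous hg_pos
      fun t ht ↦ by simpa [hgr] using hq t (Ioo_subset_Icc_self ht)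
  rw [hgr]
  exact (hg.mul (ih r.natDegree (by omega) hr rfl)).mono (by omega)

end Polynomial

/-- Fejér–Markov–Lukács: a polynomial `p` of degree at most `d` is nonnegative
on `[−1,1]` iff `p = f + (1−t)(1+t)h` with `f, h` sums of squares,
`deg f ≤ 2d`, `deg h ≤ 2d − 2`. -/
theorem nonneg_on_Icc_iff_sos_representation (d : ℕ) (p : Polynomial ℝ)
    (hdeg : p.natDegree ≤ d) :
    (∀ t ∈ Set.Icc (-1 : ℝ) 1, 0 ≤ p.eval t) ↔
      ∃ f h : Polynomial ℝ, IsSumSq f ∧ IsSumSq h ∧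
        f.natDegree ≤ 2 * d ∧ h.natDegree ≤ 2 * d - 2 ∧
        p = f + (1 - Polynomial.X) * (1 + Polynomial.X) * h := by
  constructor
  · intro hp
    obtain ⟨f, h, hf, hh, hf_deg, hh_deg, hp_eq⟩ :=
      (hasWeightedSOSRep_of_nonneg_on_Icc hp).mono (by omega : 2 * p.natDegree ≤ 2 * d)
    have hw : ((1 - X) * (1 + X) : ℝ[X]).natDegree = 2 := by compute_degree!
    have hw0 : (1 - X) * (1 + X) ≠ (0 : ℝ[X]) := ne_zero_of_natDegree_gt (hw ▸ two_pos)
    have := natDegree_le_natDegree_mul_sub_natDegree (h := h) hw0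
    exact ⟨f, h, hf, hh, hf_deg, by omega, hp_eq⟩
  · rintro ⟨f, h, hf, hh, -, -, rfl⟩ t ⟨ht₁, ht₂⟩
    simp only [eval_add, eval_mul, eval_sub, eval_one, eval_X]
    exact add_nonneg (hf.eval_nonneg t)
      (mul_nonneg (mul_nonneg (by linarith) (by linarith)) (hh.eval_nonneg t))
end

section
/- Every univariate real polynomial that is nonnegative on all of ℝ is a sum of two squares of polynomials. -/
/-!
Induct on the degree. A nonconstant real polynomial has a complex root `z`; dividing out
`(X - re z) ^ 2 + (im z) ^ 2` (which is `(X - z)(X - conj z)` for a nonreal root, and `(X - r) ^ 2`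
for a real root `r`, a double root because `p` has a minimum there) leaves a cofactor that is
again nonnegative. Since the divisor is itself a sum of two squares, the Brahmagupta–Fibonacci
identity `(a² + b²)(c² + d²) = (ac − bd)² + (ad + bc)²` closes the induction.
-/

open Polynomial

namespace Polynomial

lemma natDegree_X_sub_C_sq_add_C_sq {R : Type*} [CommRing R] [Nontrivial R] (c e : R) :
    ((X - C c) ^ 2 + C e ^ 2).natDegree = 2 := by
  rw [← C_pow, natDegree_add_C, (monic_X_sub_C c).natDegree_pow, natDegree_X_sub_C]

lemma eval_X_sub_C_sq_add_C_sq_nonneg (c e x : ℝ) : 0 ≤ ((X - C c) ^ 2 + C e ^ 2).eval x := by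
  simp only [eval_add, eval_pow, eval_sub, eval_X, eval_C]
  positivity

lemma sq_X_sub_C_dvd_of_isRoot_of_nonneg {p : ℝ[X]} {r : ℝ} (hp : ∀ x, 0 ≤ p.eval x)
    (hr : p.IsRoot r) : (X - C r) ^ 2 ∣ p := by
  rcases eq_or_ne p 0 with rfl | hp0
  · exact dvd_zero _
  have hmin : IsLocalMin (fun x ↦ p.eval x) r :=
    .of_forall fun x ↦ by simpa only [hr.eq_zero] using hp x
  have hderiv : p.derivative.eval r = 0 := by
    simpa only [Polynomial.deriv] using hmin.deriv_eq_zero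
  rw [← le_rootMultiplicity_iff hp0]
  exact (one_lt_rootMultiplicity_iff_isRoot hp0).mpr ⟨hr, hderiv⟩

lemma X_sq_sub_C_mul_X_add_C_eq_X_sub_C_sq_add_C_sq (z : ℂ) :
    (X ^ 2 - C (2 * z.re) * X + C (‖z‖ ^ 2) : ℝ[X]) = (X - C z.re) ^ 2 + C z.im ^ 2 := by
  rw [Complex.sq_norm, Complex.normSq_apply]
  simp only [map_add, map_mul, map_ofNat]
  ring

lemma exists_X_sub_C_sq_add_C_sq_dvd_of_nonneg {p : ℝ[X]} (hp : ∀ x, 0 ≤ p.eval x)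
    (hdeg : 0 < p.natDegree) : ∃ c e : ℝ, (X - C c) ^ 2 + C e ^ 2 ∣ p := by
  obtain ⟨z, hz⟩ : ∃ z : ℂ, aeval z p = 0 :=
    IsAlgClosed.exists_aeval_eq_zero ℂ p (natDegree_pos_iff_degree_pos.mp hdeg).ne'
  by_cases him : z.im = 0
  · lift z to ℝ using him with r
    have hr : p.IsRoot r := by rwa [← Complex.coe_algebraMap, aeval_algebraMap_apply, map_eq_zero] at hz
    exact ⟨r, 0, by simpa using sq_X_sub_C_dvd_of_isRoot_of_nonneg hp hr⟩
  · refine ⟨z.re, z.im, ?_⟩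
    rw [← X_sq_sub_C_mul_X_add_C_eq_X_sub_C_sq_add_C_sq]
    exact p.quadratic_dvd_of_aeval_eq_zero_im_ne_zero hz him

/-- The positivity locus of a nonzero nonnegative `d` is cofinite, hence dense, so the
sign of `q` there extends to all of `ℝ` by continuity. -/
lemma eval_nonneg_of_eval_mul_nonneg {d q : ℝ[X]} (hd0 : d ≠ 0) (hd : ∀ x, 0 ≤ d.eval x)
    (hdq : ∀ x, 0 ≤ (d * q).eval x) (x : ℝ) : 0 ≤ q.eval x := by
  have hdense : Dense {x | d.IsRoot x}ᶜ :=
    (finite_setOfPred_isRoot hd0).countable.dense_compl ℝ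
  have hsub : {x | d.IsRoot x}ᶜ ⊆ {x | 0 ≤ q.eval x} := fun y hy ↦ by
    have hpos : 0 < d.eval y := (hd y).lt_of_ne' hy
    exact nonneg_of_mul_nonneg_right (by simpa only [eval_mul] using hdq y) hpos
  have hclosed : IsClosed {x | 0 ≤ q.eval x} := isClosed_le continuous_const q.continuous
  exact hclosed.closure_subset_iff.mpr hsub (hdense x)

end Polynomial

/-- Every univariate real polynomial nonnegative on ℝ is a sum of two squares. -/
theorem nonneg_polynomial_sum_two_squares (p : Polynomial ℝ)
    (hp : ∀ x : ℝ, 0 ≤ p.eval x) :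
    ∃ a b : Polynomial ℝ, p = a ^ 2 + b ^ 2 := by
  induction hn : p.natDegree using Nat.strong_induction_on generalizing p with
  | _ n ih =>
  rcases Nat.eq_zero_or_pos n with rfl | hpos
  · rw [eq_C_of_natDegree_eq_zero hn] at hp ⊢
    refine ⟨C √(p.coeff 0), 0, ?_⟩
    rw [← C_pow, Real.sq_sqrt (by simpa using hp 0)]
    ring
  obtain ⟨c, e, q, rfl⟩ := exists_X_sub_C_sq_add_C_sq_dvd_of_nonneg hp (hn ▸ hpos)
  have hd0 : (X - C c) ^ 2 + C e ^ 2 ≠ 0 := ne_zero_of_natDegree_gt <| by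
    rw [natDegree_X_sub_C_sq_add_C_sq]; exact one_lt_two
  have hq0 : q ≠ 0 := by rintro rfl; simp at hn; omega
  have hdeg : q.natDegree < n := by
    rw [← hn, natDegree_mul hd0 hq0, natDegree_X_sub_C_sq_add_C_sq]; omega
  obtain ⟨a, b, rfl⟩ := ih _ hdeg q
    (eval_nonneg_of_eval_mul_nonneg hd0 (eval_X_sub_C_sq_add_C_sq_nonneg c e) hp) rfl
  exact ⟨_, _, sq_add_sq_mul_sq_add_sq⟩
end
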